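/- arXiv:1401.6321 — 3 statements merged into one kernel-verified Lean document; each statement's English description precedes it below -/
import Mathlib

section
/- For each C > 0 and k ∈ ℤ≥0 there exists N ∈ ℤ≥0 such that for all n ≥ N, if μ is a partition of n whose associated irreducible representation π_μ of the symmetric group S_n has dimension at most C·n^k, then either the first row of μ has length ≥ n - k or the first column of μ has length ≥ n - k. -/
/-- The hook length of the cell `c = (i, j)` (0-indexed) of a Young diagram `μ`:
arm + leg + 1, i.e. `rowLen i - j + colLen j - i - 1`. -/
def YoungDiagram.hookLength (μ : YoungDiagram) (c : ℕ × ℕ) : ℕ :=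
  (μ.rowLen c.1 - c.2) + (μ.colLen c.2 - c.1) - 1

/-- The dimension of the irreducible representation `π_μ` of the symmetric group `S_n`
(`n = μ.card`) attached to a Young diagram `μ`, given by the hook length formula
`dim π_μ = n! / ∏ hooks`. -/
def YoungDiagram.dimIrrep (μ : YoungDiagram) : ℕ :=
  (Nat.factorial μ.card) / ∏ c ∈ μ.cells, μ.hookLength c

/-!
Number the cells of `μ` from the end of the row-by-row reading order: the cell `c` gets the
number of cells weakly after it. These numbers are a permutation of `1, …, n` and dominate the
hook lengths, so `n! / ∏ hooks` is at least `∏_{c ∈ s} numCellsLexGE c / hook c` for every set `s`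
of cells. On the first row the numbers are `n - j`, which gives
`dim π_μ ≥ C(n - μ₂, μ₁ - μ₂)` and, when `4 (μ₁ + μ'₁ - 1) ≤ 3 n`, `dim π_μ ≥ (4/3)^μ₂`.
If `μ'₁ ≤ μ₁ < n - k`, then either `μ₁ - μ₂ > k` and the binomial coefficient grows like
`n^(k+1)`, or `μ₂ ≥ μ₁ - k ≥ √n - k` and the exponential bound wins.
-/

open Finset Nat

theorem Finset.prod_card_filter_le_eq_factorial {α : Type*} [LinearOrder α] (s : Finset α) :
    ∏ x ∈ s, #{y ∈ s | x ≤ y} = (#s)! := by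
  induction s using Finset.induction_on_min with
  | empty => simp
  | insert a s ha ih =>
    have ha' : a ∉ s := fun h => lt_irrefl a (ha a h)
    have hfilter : ∀ x ∈ s, #{y ∈ insert a s | x ≤ y} = #{y ∈ s | x ≤ y} := fun x hx => by
      rw [filter_insert, if_neg (not_le.2 (ha x hx))]
    rw [prod_insert ha', prod_congr rfl hfilter, ih, filter_true_of_mem, card_insert_of_notMem ha',
      factorial_succ]
    rintro y hy
    rcases mem_insert.1 hy with rfl | hy
    exacts [le_rfl, (ha y hy).le]

theorem Nat.choose_le_choose_of_le_of_two_mul_le {n i j : ℕ} (hij : i ≤ j) (hj : 2 * j ≤ n) :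
    n.choose i ≤ n.choose j := by
  induction j, hij using Nat.le_induction with
  | base => rfl
  | succ j _ ih => exact (ih (by omega)).trans (choose_le_succ_of_lt_half_left (by omega))

theorem Nat.choose_le_choose_of_le_of_le_sub {n i j : ℕ} (hij : i ≤ j) (hj : j ≤ n - i) :
    n.choose i ≤ n.choose j := by
  rcases le_or_gt (2 * j) n with h | h
  · exact choose_le_choose_of_le_of_two_mul_le hij h
  · rw [← choose_symm (show j ≤ n by omega)]
    exact choose_le_choose_of_le_of_two_mul_le (by omega) (by omega)

namespace YoungDiagram

def numCellsLexGE (μ : YoungDiagram) (c : ℕ × ℕ) : ℕ :=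
  #{d ∈ μ.cells | toLex c ≤ toLex d}

theorem prod_numCellsLexGE (μ : YoungDiagram) :
    ∏ c ∈ μ.cells, μ.numCellsLexGE c = μ.card ! := by
  have := (μ.cells.map toLex.toEmbedding).prod_card_filter_le_eq_factorial
  simpa [prod_map, filter_map, numCellsLexGE, Function.comp_def] using this

theorem numCellsLexGE_zero {μ : YoungDiagram} {j : ℕ} (hj : j ≤ μ.rowLen 0) :
    μ.numCellsLexGE (0, j) = μ.card - j := by
  have hlt : {d ∈ μ.cells | ¬toLex (0, j) ≤ toLex d} = {0} ×ˢ range j := by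
    ext ⟨i, t⟩
    simp only [mem_filter, mem_cells, Prod.Lex.toLex_le_toLex, mem_product, mem_singleton,
      mem_range]
    constructor
    · rintro ⟨-, h⟩; omega
    · rintro ⟨rfl, ht⟩
      exact ⟨mem_iff_lt_rowLen.2 (by omega), by omega⟩
  have := card_filter_add_card_filter_not (s := μ.cells) (fun d => toLex (0, j) ≤ toLex d)
  rw [hlt, card_product, card_singleton, card_range, one_mul] at this
  rw [numCellsLexGE, YoungDiagram.card, ← this, Nat.add_sub_cancel]

theorem hookLength_pos {μ : YoungDiagram} {c : ℕ × ℕ} (hc : c ∈ μ) : 0 < μ.hookLength c := by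
  have := mem_iff_lt_rowLen.1 hc
  have := mem_iff_lt_colLen.1 hc
  simp only [hookLength]
  omega

theorem hookLength_le_numCellsLexGE {μ : YoungDiagram} {i j : ℕ} (h : (i, j) ∈ μ) :
    μ.hookLength (i, j) ≤ μ.numCellsLexGE (i, j) := by
  have hj := mem_iff_lt_rowLen.1 h
  have hi := mem_iff_lt_colLen.1 h
  let arm : Finset (ℕ × ℕ) := {i} ×ˢ Ico j (μ.rowLen i)
  let leg : Finset (ℕ × ℕ) := Ico (i + 1) (μ.colLen j) ×ˢ {j}
  have hdisj : Disjoint arm leg := by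
    simp only [arm, leg, disjoint_left, mem_product, mem_singleton, mem_Ico]
    omega
  have hsub : arm ∪ leg ⊆ {d ∈ μ.cells | toLex (i, j) ≤ toLex d} := by
    rintro ⟨i', j'⟩ hd
    simp only [arm, leg, mem_union, mem_product, mem_singleton, mem_Ico] at hd
    simp only [mem_filter, mem_cells, Prod.Lex.toLex_le_toLex]
    rcases hd with ⟨rfl, hj'⟩ | ⟨hi', rfl⟩
    · exact ⟨mem_iff_lt_rowLen.2 hj'.2, by omega⟩
    · exact ⟨mem_iff_lt_colLen.2 hi'.2, by omega⟩
  have := card_le_card hsub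
  rw [card_union_of_disjoint hdisj] at this
  simp only [arm, leg, card_product, card_singleton, Nat.card_Ico] at this
  simp only [hookLength, numCellsLexGE]
  omega

theorem le_dimIrrep_of_mul_prod_le {μ : YoungDiagram} {s : Finset (ℕ × ℕ)} (hs : s ⊆ μ.cells)
    {m : ℕ} (h : m * ∏ c ∈ s, μ.hookLength c ≤ ∏ c ∈ s, μ.numCellsLexGE c) :
    m ≤ μ.dimIrrep := by
  have hrest : ∏ c ∈ μ.cells \ s, μ.hookLength c ≤ ∏ c ∈ μ.cells \ s, μ.numCellsLexGE c :=
    prod_le_prod' fun c hc => hookLength_le_numCellsLexGE ((mem_cells c).1 (mem_sdiff.1 hc).1)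
  rw [dimIrrep, Nat.le_div_iff_mul_le (prod_pos fun c hc => hookLength_pos ((mem_cells c).1 hc)),
    ← prod_numCellsLexGE, ← prod_sdiff (f := μ.numCellsLexGE) hs,
    ← prod_sdiff (f := μ.hookLength) hs]
  calc m * ((∏ c ∈ μ.cells \ s, μ.hookLength c) * ∏ c ∈ s, μ.hookLength c)
      = (∏ c ∈ μ.cells \ s, μ.hookLength c) * (m * ∏ c ∈ s, μ.hookLength c) := by ring
    _ ≤ _ := Nat.mul_le_mul hrest h

theorem le_dimIrrep_of_mul_prod_rowLen_zero_le {μ : YoungDiagram} {T : Finset ℕ}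
    (hT : ∀ t ∈ T, t < μ.rowLen 0) {m : ℕ}
    (h : m * ∏ t ∈ T, μ.hookLength (0, t) ≤ ∏ t ∈ T, (μ.card - t)) : m ≤ μ.dimIrrep := by
  refine le_dimIrrep_of_mul_prod_le (s := T.map ⟨(0, ·), Prod.mk_right_injective 0⟩) ?_ ?_
  · simp only [subset_iff, mem_map, Function.Embedding.coeFn_mk, mem_cells]
    rintro _ ⟨t, ht, rfl⟩
    exact mem_iff_lt_rowLen.2 (hT t ht)
  · simpa only [prod_map, Function.Embedding.coeFn_mk,
      prod_congr rfl fun t ht => numCellsLexGE_zero (hT t ht).le] using h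

theorem hookLength_zero_le {μ : YoungDiagram} {j : ℕ} (hj : j < μ.rowLen 0) :
    μ.hookLength (0, j) < μ.rowLen 0 - j + μ.colLen 0 := by
  have := μ.colLen_anti 0 j j.zero_le
  have := mem_iff_lt_colLen.1 (mem_iff_lt_rowLen.2 hj)
  simp only [hookLength]
  omega

theorem hookLength_zero_of_rowLen_one_le {μ : YoungDiagram} {j : ℕ} (h₁ : μ.rowLen 1 ≤ j)
    (h₀ : j < μ.rowLen 0) : μ.hookLength (0, j) = μ.rowLen 0 - j := by
  have : μ.colLen j = 1 := by
    have := mem_iff_lt_colLen.1 (mem_iff_lt_rowLen.2 h₀)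
    have : ¬1 < μ.colLen j := fun h => by
      have := mem_iff_lt_rowLen.1 (mem_iff_lt_colLen.2 h)
      omega
    omega
  simp only [hookLength, this]
  omega

theorem choose_le_dimIrrep (μ : YoungDiagram) :
    (μ.card - μ.rowLen 1).choose (μ.rowLen 0 - μ.rowLen 1) ≤ μ.dimIrrep := by
  set a := μ.rowLen 1
  set r := μ.rowLen 0
  refine le_dimIrrep_of_mul_prod_rowLen_zero_le (T := Ico a r) (fun t ht => (mem_Ico.1 ht).2) ?_
  have hhook : ∏ t ∈ Ico a r, μ.hookLength (0, t) = (r - a)! := by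
    rw [prod_Ico_eq_prod_range, ← descFactorial_self, descFactorial_eq_prod_range]
    refine prod_congr rfl fun t ht => ?_
    have := mem_range.1 ht
    rw [hookLength_zero_of_rowLen_one_le (by omega) (by omega)]
    omega
  have htail : ∏ t ∈ Ico a r, (μ.card - t) = (μ.card - a).descFactorial (r - a) := by
    rw [prod_Ico_eq_prod_range, descFactorial_eq_prod_range]
    exact prod_congr rfl fun t _ => by omega
  rw [hhook, htail, descFactorial_eq_factorial_mul_choose, mul_comm]

theorem floor_four_div_three_pow_le_dimIrrep {μ : YoungDiagram}
    (h : 4 * (μ.rowLen 0 + μ.colLen 0 - 1) ≤ 3 * μ.card) :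
    ⌊(4 / 3 : ℝ) ^ μ.rowLen 1⌋₊ ≤ μ.dimIrrep := by
  set a := μ.rowLen 1
  have har : a ≤ μ.rowLen 0 := μ.rowLen_anti 0 1 zero_le_one
  refine le_dimIrrep_of_mul_prod_rowLen_zero_le (T := range a)
    (fun t ht => (mem_range.1 ht).trans_le har) ?_
  have hhook : ∀ t ∈ range a, (μ.hookLength (0, t) : ℝ) ≤ 3 / 4 * (μ.card - t : ℕ) := by
    intro t ht
    have hta := mem_range.1 ht
    have := hookLength_zero_le (hta.trans_le har)
    have : 4 * μ.hookLength (0, t) ≤ 3 * (μ.card - t) := by omega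
    have : (4 : ℝ) * μ.hookLength (0, t) ≤ 3 * (μ.card - t : ℕ) := by exact_mod_cast this
    linarith
  rw [← Nat.cast_le (α := ℝ)]
  push_cast
  calc (⌊(4 / 3 : ℝ) ^ a⌋₊ : ℝ) * ∏ t ∈ range a, (μ.hookLength (0, t) : ℝ)
      ≤ (4 / 3) ^ a * ∏ t ∈ range a, (3 / 4 * (μ.card - t : ℕ) : ℝ) := by
        gcongr
        · exact Nat.floor_le (by positivity)
        · exact hhook _ ‹_›
    _ = ∏ t ∈ range a, ((μ.card - t : ℕ) : ℝ) := by
        rw [prod_mul_distrib, prod_const, card_range, ← mul_assoc, ← mul_pow]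
        norm_num

theorem card_le_rowLen_mul_colLen (μ : YoungDiagram) : μ.card ≤ μ.rowLen 0 * μ.colLen 0 := by
  have hsub : μ.cells ⊆ range (μ.colLen 0) ×ˢ range (μ.rowLen 0) := by
    rintro ⟨i, j⟩ h
    rw [mem_cells] at h
    have := μ.rowLen_anti 0 i i.zero_le
    have := μ.colLen_anti 0 j j.zero_le
    have := mem_iff_lt_rowLen.1 h
    have := mem_iff_lt_colLen.1 h
    simp only [mem_product, mem_range]
    omega
  simpa [mul_comm] using card_le_card hsub

theorem rowLen_add_rowLen_add_colLen_le_card (μ : YoungDiagram) :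
    μ.rowLen 0 + μ.rowLen 1 + (μ.colLen 0 - 2) ≤ μ.card := by
  have hsub : (μ.row 0 ∪ μ.row 1) ∪ Ico 2 (μ.colLen 0) ×ˢ {0} ⊆ μ.cells := by
    rintro ⟨i, j⟩ hc
    simp only [mem_union, mem_row_iff, mem_product, mem_singleton, mem_Ico] at hc
    rw [mem_cells]
    rcases hc with (h | h) | ⟨⟨-, hi⟩, rfl⟩
    · exact h.1
    · exact h.1
    · exact mem_iff_lt_colLen.2 hi
  have hdisj₁ : Disjoint (μ.row 0) (μ.row 1) := by
    simp only [disjoint_left, mem_row_iff]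
    omega
  have hdisj₂ : Disjoint (μ.row 0 ∪ μ.row 1) (Ico 2 (μ.colLen 0) ×ˢ {0}) := by
    simp only [disjoint_left, mem_union, mem_row_iff, mem_product, mem_Ico]
    omega
  have := card_le_card hsub
  rwa [card_union_of_disjoint hdisj₂, card_union_of_disjoint hdisj₁, ← rowLen_eq_card,
    ← rowLen_eq_card, card_product, Nat.card_Ico, card_singleton, mul_one] at this

theorem cells_transpose (μ : YoungDiagram) :
    μ.transpose.cells = μ.cells.map (Equiv.prodComm ℕ ℕ).toEmbedding := by
  ext c
  simp [mem_transpose]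

theorem card_transpose (μ : YoungDiagram) : μ.transpose.card = μ.card := by
  rw [YoungDiagram.card, cells_transpose, card_map, YoungDiagram.card]

theorem dimIrrep_transpose (μ : YoungDiagram) : μ.transpose.dimIrrep = μ.dimIrrep := by
  rw [dimIrrep, dimIrrep, card_transpose, cells_transpose, prod_map]
  congr 2 with c
  simp only [hookLength, Equiv.coe_toEmbedding, Equiv.prodComm_apply, Prod.fst_swap,
    Prod.snd_swap, rowLen_transpose, colLen_transpose]
  omega

theorem choose_le_dimIrrep_or_floor_pow_le_dimIrrep {μ : YoungDiagram} {k : ℕ}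
    (hcr : μ.colLen 0 ≤ μ.rowLen 0) (hrow : μ.rowLen 0 + k < μ.card) (hk : 8 * k + 4 ≤ μ.card) :
    (∃ m, μ.card ≤ 2 * m ∧ m.choose (k + 1) ≤ μ.dimIrrep) ∨
      ∃ r, μ.card ≤ r * r ∧ ⌊(4 / 3 : ℝ) ^ (r - k)⌋₊ ≤ μ.dimIrrep := by
  have hshape := μ.rowLen_add_rowLen_add_colLen_le_card
  have har := μ.rowLen_anti 0 1 zero_le_one
  rcases lt_or_ge (μ.rowLen 1 + k) (μ.rowLen 0) with h | h
  · refine Or.inl ⟨μ.card - μ.rowLen 1, by omega, ?_⟩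
    calc _ ≤ (μ.card - μ.rowLen 1).choose (μ.rowLen 0 - μ.rowLen 1) :=
          Nat.choose_le_choose_of_le_of_le_sub (by omega) (by omega)
      _ ≤ _ := μ.choose_le_dimIrrep
  · refine Or.inr ⟨μ.rowLen 0, μ.card_le_rowLen_mul_colLen.trans (Nat.mul_le_mul_left _ hcr), ?_⟩
    calc _ ≤ ⌊(4 / 3 : ℝ) ^ μ.rowLen 1⌋₊ :=
          Nat.floor_le_floor (pow_le_pow_right₀ (by norm_num) (by omega))
      _ ≤ _ := floor_four_div_three_pow_le_dimIrrep (by omega)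

end YoungDiagram

open Filter

theorem eventually_mul_pow_lt_choose {C : ℝ} (hC : 0 ≤ C) (k : ℕ) :
    ∀ᶠ m : ℕ in atTop, ∀ n ≤ 2 * m, C * (n : ℝ) ^ k < m.choose (k + 1) := by
  set K : ℝ := 2 ^ (k + 1) * (k + 1)!
  have hK : 0 < K := by positivity
  filter_upwards [eventually_ge_atTop (2 * k + 1),
    (tendsto_natCast_atTop_atTop (R := ℝ)).eventually_gt_atTop (C * 2 ^ k * K)]
    with m hkm hCm n hn
  have hm : (0 : ℝ) < m := Nat.cast_pos.2 (by omega)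
  have hchoose : (m : ℝ) ^ (k + 1) / K ≤ m.choose (k + 1) := by
    have hhalf : (m : ℝ) / 2 ≤ (m + 1 - (k + 1) : ℕ) := by
      rw [div_le_iff₀ two_pos]
      exact_mod_cast (by omega : m ≤ (m + 1 - (k + 1)) * 2)
    calc (m : ℝ) ^ (k + 1) / K = ((m : ℝ) / 2) ^ (k + 1) / (k + 1)! := by
          rw [div_pow, div_div]
      _ ≤ ((m + 1 - (k + 1) : ℕ) : ℝ) ^ (k + 1) / (k + 1)! := by gcongr
      _ ≤ _ := Nat.pow_le_choose _ _
  have hn' : (n : ℝ) ≤ 2 * m := by exact_mod_cast hn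
  calc C * (n : ℝ) ^ k ≤ C * 2 ^ k * (m : ℝ) ^ k := by
        rw [mul_assoc, ← mul_pow]; gcongr
    _ < (m : ℝ) ^ (k + 1) / K := by
        rw [lt_div_iff₀ hK, pow_succ, mul_right_comm, mul_comm _ (m : ℝ)]
        gcongr
    _ ≤ _ := hchoose

theorem eventually_mul_pow_lt_floor_pow {C : ℝ} (hC : 0 ≤ C) (k : ℕ) :
    ∀ᶠ r : ℕ in atTop, ∀ n ≤ r * r, C * (n : ℝ) ^ k < ⌊(4 / 3 : ℝ) ^ (r - k)⌋₊ := by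
  have hc : 0 < ((C + 1) * (4 / 3 : ℝ) ^ k)⁻¹ := by positivity
  have hlittleO := isLittleO_pow_const_const_pow_of_one_lt (R := ℝ) (2 * k)
    (by norm_num : (1 : ℝ) < 4 / 3)
  filter_upwards [eventually_ge_atTop (k + 1), hlittleO.bound hc] with r hkr hr n hn
  have hpow : (C + 1) * (r : ℝ) ^ (2 * k) ≤ (4 / 3 : ℝ) ^ (r - k) := by
    rw [pow_sub₀ _ (by norm_num) (by omega), ← div_eq_mul_inv, le_div_iff₀ (by positivity)]
    rw [norm_pow, Real.norm_natCast, Real.norm_of_nonneg (by positivity), inv_mul_eq_div,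
      le_div_iff₀ (by positivity)] at hr
    linarith
  have hn' : (n : ℝ) ^ k ≤ (r : ℝ) ^ (2 * k) := by
    rw [pow_mul, sq]
    gcongr
    exact_mod_cast hn
  have h1 : 1 ≤ (r : ℝ) ^ (2 * k) := one_le_pow₀ (by exact_mod_cast (by omega : 1 ≤ r))
  have := Nat.sub_one_lt_floor ((4 / 3 : ℝ) ^ (r - k))
  nlinarith

/-- For each `C > 0` and `k ∈ ℤ≥0` there exists `N` such that for all `n ≥ N`, if `μ` is a
partition of `n` with `dim π_μ ≤ C·n^k`, then the first row or first column of `μ` has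
length `≥ n - k`. -/
theorem stmt0 (C : ℝ) (hC : 0 < C) (k : ℕ) :
    ∃ N : ℕ, ∀ n : ℕ, N ≤ n → ∀ μ : YoungDiagram, μ.card = n →
      (μ.dimIrrep : ℝ) ≤ C * (n : ℝ) ^ k →
      n - k ≤ μ.rowLen 0 ∨ n - k ≤ μ.colLen 0 := by
  obtain ⟨M, hM⟩ := eventually_atTop.1 (eventually_mul_pow_lt_choose hC.le k)
  obtain ⟨R, hR⟩ := eventually_atTop.1 (eventually_mul_pow_lt_floor_pow hC.le k)
  refine ⟨2 * M + R * R + 8 * k + 4, fun n hn μ hμ hdim => ?_⟩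
  by_contra! hlong
  wlog hcr : μ.colLen 0 ≤ μ.rowLen 0 generalizing μ
  · refine this μ.transpose (by rwa [μ.card_transpose]) (by rwa [μ.dimIrrep_transpose]) ?_ ?_ <;>
      simp only [YoungDiagram.rowLen_transpose, YoungDiagram.colLen_transpose] <;> omega
  rcases YoungDiagram.choose_le_dimIrrep_or_floor_pow_le_dimIrrep (k := k) hcr (by omega)
    (by omega) with ⟨m, hnm, hm⟩ | ⟨r, hnr, hr⟩
  · have := hM m (by omega) n (hμ ▸ hnm)
    have : (m.choose (k + 1) : ℝ) ≤ μ.dimIrrep := by exact_mod_cast hm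
    linarith
  · have := hR r (Nat.mul_self_le_mul_self_iff.1 (by omega)) n (hμ ▸ hnr)
    have : (⌊(4 / 3 : ℝ) ^ (r - k)⌋₊ : ℝ) ≤ μ.dimIrrep := by exact_mod_cast hr
    linarith
end

section
/- Let μ be a Young diagram with n cells whose first row has length d, and let c_1, ..., c_d be the lengths of its columns (in reverse order). Then ∏_{i=1}^{d} (1 + (c_i - 1)/i) ≤ (n/d)^d, and consequently dim π_μ ≥ C(n,d) · (d/n)^d. -/
open Finset Nat

theorem Finset.prod_Icc_one_reflect {M : Type*} [CommMonoid M] (f : ℕ → M) (d : ℕ) :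
    ∏ i ∈ Icc 1 d, f (d - i) = ∏ j ∈ range d, f j := by
  rw [← Ico_add_one_right_eq_Icc, prod_Ico_reflect f 1 le_rfl, Nat.sub_self,
    add_tsub_cancel_right, range_eq_Ico]

theorem Finset.sum_Icc_one_reflect {M : Type*} [AddCommMonoid M] (f : ℕ → M) (d : ℕ) :
    ∑ i ∈ Icc 1 d, f (d - i) = ∑ j ∈ range d, f j := by
  rw [← Ico_add_one_right_eq_Icc, sum_Ico_reflect f 1 le_rfl, Nat.sub_self,
    add_tsub_cancel_right, range_eq_Ico]

theorem Real.prod_le_mean_pow {ι : Type*} (s : Finset ι) (z : ι → ℝ)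
    (hz : ∀ i ∈ s, 0 ≤ z i) : ∏ i ∈ s, z i ≤ ((∑ i ∈ s, z i) / #s) ^ #s := by
  rcases s.eq_empty_or_nonempty with rfl | hs
  · simp
  have hcard : #s ≠ 0 := hs.card_ne_zero
  have amgm := Real.geom_mean_le_arith_mean_weighted s (fun _ => ((#s : ℕ) : ℝ)⁻¹) z
    (fun _ _ => by positivity) (by simp [hcard]) hz
  calc ∏ i ∈ s, z i = (∏ i ∈ s, z i ^ ((#s : ℕ) : ℝ)⁻¹) ^ #s := by
        rw [← prod_pow]
        exact prod_congr rfl fun i hi => (Real.rpow_inv_natCast_pow (hz i hi) hcard).symm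
    _ ≤ ((∑ i ∈ s, z i) / #s) ^ #s := by
        gcongr
        · exact prod_nonneg fun i hi => Real.rpow_nonneg (hz i hi) _
        · simpa [← mul_sum, div_eq_inv_mul] using amgm

theorem le_cast_div_of_dvd_of_mul_le {a b : ℕ} {x : ℝ} (hb : 0 < b) (hba : b ∣ a)
    (h : x * b ≤ a) : x ≤ ((a / b : ℕ) : ℝ) := by
  rw [Nat.cast_div hba (by positivity), le_div_iff₀ (by positivity)]
  exact h

/-- The interval `[x, 2x]` contains an integer once `x ≥ 1`. -/
theorem le_cast_div_of_two_mul_le {a b : ℕ} {x : ℝ} (hb : 0 < b) (hba : b ≤ a)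
    (h : 2 * x * b ≤ a) : x ≤ ((a / b : ℕ) : ℝ) := by
  rcases le_or_gt x 1 with hx | hx
  · exact hx.trans (by exact_mod_cast (Nat.one_le_div_iff hb).2 hba)
  have hceil : (⌈x⌉₊ : ℝ) * b ≤ a := by
    have := Nat.ceil_lt_add_one (by positivity : (0 : ℝ) ≤ x)
    nlinarith [(by positivity : (0 : ℝ) < b)]
  exact (Nat.le_ceil x).trans
    (by exact_mod_cast (Nat.le_div_iff_mul_le hb).2 (by exact_mod_cast hceil))

theorem Nat.descFactorial_mul_factorial_mul_factorial_dvd {d e : ℕ} (he : 0 < e)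
    (hed : e ≤ d) : (d + 1).descFactorial e * (d - e)! * e ! ∣ (d + e)! := by
  obtain ⟨k, rfl⟩ := Nat.exists_eq_add_of_lt he
  simp only [zero_add] at hed ⊢
  -- the quotient is the ballot number `C(d + e, e) - C(d + e, e - 1)`
  refine ⟨(d + (k + 1)).choose (k + 1) - (d + (k + 1)).choose k, ?_⟩
  have hdesc : (d + 1).descFactorial (k + 1) * (d - (k + 1))! * (d - k) = (d + 1)! := by
    rw [← factorial_mul_descFactorial (show k + 1 ≤ d + 1 by omega), mul_comm,
      show d + 1 - (k + 1) = d - (k + 1) + 1 by omega, factorial_succ, mul_assoc,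
      show d - (k + 1) + 1 = d - k by omega]
    ring
  have h1 : (d + 1)! * (k + 1)! * (d + (k + 1)).choose (k + 1) = (d + 1) * (d + (k + 1))! := by
    rw [← add_choose_mul_factorial_mul_factorial d (k + 1), factorial_succ]; ring
  have h2 : (d + 1)! * (k + 1)! * (d + (k + 1)).choose k = (k + 1) * (d + (k + 1))! := by
    rw [show d + (k + 1) = d + 1 + k by omega,
      ← add_choose_mul_factorial_mul_factorial (d + 1) k, factorial_succ k]; ring
  apply Nat.eq_of_mul_eq_mul_right (show 0 < d - k by omega)
  calc (d + (k + 1))! * (d - k) = (d + 1) * (d + (k + 1))! - (k + 1) * (d + (k + 1))! := by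
        rw [← Nat.sub_mul, show d + 1 - (k + 1) = d - k by omega, mul_comm]
    _ = _ := by
        rw [← h1, ← h2, ← Nat.mul_sub, ← hdesc]; ring

namespace YoungDiagram

variable (μ : YoungDiagram)

def hookProd : ℕ := ∏ c ∈ μ.cells, μ.hookLength c

def firstRowHookProd : ℕ := ∏ j ∈ range (μ.rowLen 0), μ.hookLength (0, j)

def rowSuccEmb : ℕ × ℕ ↪ ℕ × ℕ :=
  ⟨fun c => (c.1 + 1, c.2), fun a b h => by simpa [Prod.ext_iff] using h⟩

noncomputable def dropFirstRow : YoungDiagram where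
  cells := μ.cells.preimage rowSuccEmb rowSuccEmb.injective.injOn
  isLowerSet a b hba ha := by
    simp only [coe_preimage, Set.mem_preimage, mem_coe, mem_cells] at ha ⊢
    exact μ.isLowerSet (Prod.mk_le_mk.2 ⟨Nat.add_le_add_right hba.1 1, hba.2⟩) ha

variable {μ}

@[simp] theorem mem_dropFirstRow {i j : ℕ} : (i, j) ∈ μ.dropFirstRow ↔ (i + 1, j) ∈ μ :=
  mem_preimage (hf := rowSuccEmb.injective.injOn)

theorem lt_colLen_iff_lt_rowLen {i j : ℕ} : i < μ.colLen j ↔ j < μ.rowLen i :=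
  mem_iff_lt_colLen.symm.trans mem_iff_lt_rowLen

theorem colLen_pos {j : ℕ} (hj : j < μ.rowLen 0) : 0 < μ.colLen j :=
  lt_colLen_iff_lt_rowLen.2 hj

variable (μ)

@[simp] theorem rowLen_dropFirstRow (i : ℕ) : μ.dropFirstRow.rowLen i = μ.rowLen (i + 1) :=
  eq_of_forall_lt_iff fun j => by
    rw [← mem_iff_lt_rowLen, ← mem_iff_lt_rowLen, mem_dropFirstRow]

@[simp] theorem colLen_dropFirstRow (j : ℕ) : μ.dropFirstRow.colLen j = μ.colLen j - 1 :=
  eq_of_forall_lt_iff fun i => by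
    rw [← mem_iff_lt_colLen, mem_dropFirstRow, mem_iff_lt_colLen]; omega

theorem hookLength_row_zero (j : ℕ) :
    μ.hookLength (0, j) = μ.rowLen 0 - j + μ.colLen j - 1 := rfl

theorem hookLength_dropFirstRow (i j : ℕ) :
    μ.dropFirstRow.hookLength (i, j) = μ.hookLength (i + 1, j) := by
  simp only [hookLength, rowLen_dropFirstRow, colLen_dropFirstRow]
  omega

theorem map_rowSuccEmb_cells_dropFirstRow :
    μ.dropFirstRow.cells.map rowSuccEmb = {c ∈ μ.cells | c.1 ≠ 0} := by
  ext ⟨i, j⟩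
  simp only [mem_map, mem_filter, mem_cells, rowSuccEmb, Prod.ext_iff]
  constructor
  · rintro ⟨⟨i', j'⟩, hc, rfl, rfl⟩
    exact ⟨mem_dropFirstRow.1 hc, by simp⟩
  · rintro ⟨hc, hi⟩
    obtain ⟨i', rfl⟩ := Nat.exists_eq_succ_of_ne_zero hi
    exact ⟨(i', j), mem_dropFirstRow.2 hc, rfl, rfl⟩

theorem card_eq_rowLen_add_card_dropFirstRow : μ.card = μ.rowLen 0 + μ.dropFirstRow.card := by
  rw [YoungDiagram.card, YoungDiagram.card, ← card_map (s := μ.dropFirstRow.cells) rowSuccEmb,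
    map_rowSuccEmb_cells_dropFirstRow, rowLen_eq_card, row,
    ← card_filter_add_card_filter_not (fun c : ℕ × ℕ => c.1 = 0)]

theorem card_dropFirstRow : μ.dropFirstRow.card = μ.card - μ.rowLen 0 := by
  have := μ.card_eq_rowLen_add_card_dropFirstRow
  omega

theorem rowLen_zero_le_card : μ.rowLen 0 ≤ μ.card := by
  have := μ.card_eq_rowLen_add_card_dropFirstRow
  omega

theorem hookProd_eq_firstRowHookProd_mul :
    μ.hookProd = μ.firstRowHookProd * μ.dropFirstRow.hookProd := by
  rw [hookProd, hookProd, ← prod_filter_mul_prod_filter_not μ.cells (fun c => c.1 = 0)]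
  congr 1
  · rw [firstRowHookProd, ← row, row_eq_prod, singleton_product, prod_map]
    rfl
  · rw [← map_rowSuccEmb_cells_dropFirstRow, prod_map]
    exact prod_congr rfl fun ⟨i, j⟩ _ => (hookLength_dropFirstRow μ i j).symm

theorem hookProd_pos : 0 < μ.hookProd :=
  prod_pos fun ⟨i, j⟩ hc => by
    have := mem_iff_lt_rowLen.1 ((mem_cells _).1 hc)
    have := mem_iff_lt_colLen.1 ((mem_cells _).1 hc)
    simp only [hookLength]
    omega

theorem hookProd_eq_one_of_card_eq_zero (h : μ.card = 0) : μ.hookProd = 1 := by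
  rw [hookProd, card_eq_zero.1 h, prod_empty]

theorem sum_colLen_eq_card : ∑ j ∈ range (μ.rowLen 0), μ.colLen j = μ.card := by
  rw [YoungDiagram.card, card_eq_sum_card_fiberwise (f := Prod.snd) (t := range (μ.rowLen 0))]
  · exact sum_congr rfl fun j _ => μ.colLen_eq_card
  · rintro ⟨i, j⟩ hc
    rw [mem_coe, mem_cells] at hc
    rw [mem_coe, mem_range, ← mem_iff_lt_rowLen]
    exact μ.up_left_mem (Nat.zero_le i) le_rfl hc

variable {μ}

theorem card_eq_zero_of_rowLen_zero (h : μ.rowLen 0 = 0) : μ.card = 0 := by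
  rw [← sum_colLen_eq_card, h, range_zero, sum_empty]

theorem card_dropFirstRow_lt (h : μ.card ≠ 0) : μ.dropFirstRow.card < μ.card := by
  have := μ.card_eq_rowLen_add_card_dropFirstRow
  have : μ.rowLen 0 ≠ 0 := fun h0 => h (card_eq_zero_of_rowLen_zero h0)
  omega

theorem colLen_add_rowLen_le {j : ℕ} (hj : j < μ.rowLen 0) :
    μ.colLen j + μ.rowLen 0 ≤ μ.card + 1 := by
  have hsum := add_sum_erase _ μ.colLen (mem_range.2 hj)
  have hrest : #((range (μ.rowLen 0)).erase j) • 1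
      ≤ ∑ k ∈ (range (μ.rowLen 0)).erase j, μ.colLen k :=
    card_nsmul_le_sum _ _ _ fun k hk => colLen_pos (mem_range.1 (mem_of_mem_erase hk))
  rw [card_erase_of_mem (mem_range.2 hj), card_range, smul_eq_mul, mul_one] at hrest
  rw [sum_colLen_eq_card] at hsum
  omega

theorem colLen_one_add_rowLen_le (h1 : 1 < μ.rowLen 0) (h2 : 0 < μ.rowLen 1) :
    μ.colLen 1 + μ.rowLen 0 ≤ μ.card := by
  have h2 := lt_colLen_iff_lt_rowLen.2 h2
  obtain ⟨d, hd⟩ := Nat.exists_eq_add_of_le h1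
  have hrest : #(range d) • 1 ≤ ∑ k ∈ range d, μ.colLen (k + 1 + 1) :=
    card_nsmul_le_sum _ _ _ fun k hk => colLen_pos (by have := mem_range.1 hk; omega)
  have hsum := μ.sum_colLen_eq_card
  rw [hd, add_comm 2 d, sum_range_succ', sum_range_succ', zero_add] at hsum
  rw [card_range, smul_eq_mul, mul_one] at hrest
  omega

theorem hookLength_row_zero_add_le {j : ℕ} (hj : j < μ.rowLen 0) :
    μ.hookLength (0, j) + j ≤ μ.card := by
  have := colLen_add_rowLen_le hj
  rw [hookLength_row_zero]
  omega

variable (μ)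

theorem firstRowHookProd_le_descFactorial :
    μ.firstRowHookProd ≤ μ.card.descFactorial (μ.rowLen 0) := by
  rw [firstRowHookProd, descFactorial_eq_prod_range]
  exact prod_le_prod' fun j hj => by have := hookLength_row_zero_add_le (mem_range.1 hj); omega

variable {μ}

theorem firstRowHookProd_lt_descFactorial (h1 : 1 < μ.rowLen 0) (h2 : 0 < μ.rowLen 1) :
    μ.firstRowHookProd < μ.card.descFactorial (μ.rowLen 0) := by
  rw [firstRowHookProd, descFactorial_eq_prod_range]
  refine prod_lt_prod (fun j hj => ?_) (fun j hj => ?_) ⟨1, mem_range.2 h1, ?_⟩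
  · have := colLen_pos (mem_range.1 hj)
    have := mem_range.1 hj
    rw [hookLength_row_zero]
    omega
  · have := hookLength_row_zero_add_le (mem_range.1 hj)
    omega
  · have := colLen_one_add_rowLen_le h1 h2
    rw [hookLength_row_zero]
    omega

variable (μ)

theorem descFactorial_mul_factorial_card_dropFirstRow :
    μ.card.descFactorial (μ.rowLen 0) * μ.dropFirstRow.card ! = μ.card ! := by
  rw [mul_comm, card_dropFirstRow]
  exact factorial_mul_descFactorial μ.rowLen_zero_le_card

theorem hookProd_le_factorial (μ : YoungDiagram) : μ.hookProd ≤ μ.card ! := by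
  by_cases h : μ.card = 0
  · rw [hookProd_eq_one_of_card_eq_zero μ h, h, factorial_zero]
  calc μ.hookProd = μ.firstRowHookProd * μ.dropFirstRow.hookProd :=
        μ.hookProd_eq_firstRowHookProd_mul
    _ ≤ μ.card.descFactorial (μ.rowLen 0) * μ.dropFirstRow.card ! :=
        Nat.mul_le_mul μ.firstRowHookProd_le_descFactorial μ.dropFirstRow.hookProd_le_factorial
    _ = μ.card ! := μ.descFactorial_mul_factorial_card_dropFirstRow
termination_by μ.card
decreasing_by exact card_dropFirstRow_lt h

variable {μ}

theorem hookProd_lt_factorial (h1 : 1 < μ.rowLen 0) (h2 : 0 < μ.rowLen 1) :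
    μ.hookProd < μ.card ! := by
  calc μ.hookProd = μ.firstRowHookProd * μ.dropFirstRow.hookProd :=
        μ.hookProd_eq_firstRowHookProd_mul
    _ < μ.card.descFactorial (μ.rowLen 0) * μ.dropFirstRow.card ! :=
        Nat.mul_lt_mul_of_lt_of_le (firstRowHookProd_lt_descFactorial h1 h2)
          μ.dropFirstRow.hookProd_le_factorial (factorial_pos _)
    _ = μ.card ! := μ.descFactorial_mul_factorial_card_dropFirstRow

theorem prod_hookLength_Ico_of_colLen_eq {a b c : ℕ} (hb : b ≤ μ.rowLen 0) (hc : 0 < c)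
    (h : ∀ j ∈ Ico a b, μ.colLen j = c) :
    ∏ j ∈ Ico a b, μ.hookLength (0, j) = (μ.rowLen 0 + c - 1 - a).descFactorial (b - a) := by
  rw [prod_Ico_eq_prod_range, descFactorial_eq_prod_range]
  refine prod_congr rfl fun t ht => ?_
  have := mem_range.1 ht
  rw [hookLength_row_zero, h (a + t) (mem_Ico.2 ⟨by omega, by omega⟩)]
  omega

theorem hookProd_eq_factorial_of_colLen_one_eq_zero {μ : YoungDiagram} (h : μ.colLen 1 = 0) :
    μ.hookProd = μ.card ! := by
  by_cases hμ : μ.card = 0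
  · rw [hookProd_eq_one_of_card_eq_zero μ hμ, hμ, factorial_zero]
  have hrow : μ.rowLen 0 = 1 := by
    have : μ.rowLen 0 ≠ 0 := fun h0 => hμ (card_eq_zero_of_rowLen_zero h0)
    have : ¬ 1 < μ.rowLen 0 := fun h1 => (colLen_pos h1).ne' h
    omega
  have hcol : μ.colLen 0 = μ.card := by
    rw [← sum_colLen_eq_card, hrow, sum_range_one]
  have hdrop : μ.dropFirstRow.colLen 1 = 0 := by rw [colLen_dropFirstRow, h]
  rw [μ.hookProd_eq_firstRowHookProd_mul, hookProd_eq_factorial_of_colLen_one_eq_zero hdrop,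
    firstRowHookProd, hrow, prod_range_one, hookLength_row_zero, hrow, hcol, card_dropFirstRow,
    hrow, show 1 - 0 + μ.card - 1 = μ.card by omega, mul_factorial_pred hμ]
termination_by μ.card
decreasing_by exact card_dropFirstRow_lt hμ

theorem hookProd_eq_factorial_of_rowLen_one_eq_zero (h : μ.rowLen 1 = 0) :
    μ.hookProd = (μ.rowLen 0)! := by
  have hdrop : μ.dropFirstRow.card = 0 := card_eq_zero_of_rowLen_zero (by simpa using h)
  have hcol : ∀ j ∈ Ico 0 (μ.rowLen 0), μ.colLen j = 1 := fun j hj => by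
    have := colLen_pos (mem_Ico.1 hj).2
    have := (lt_colLen_iff_lt_rowLen (μ := μ) (i := 1) (j := j)).not.2 (by omega)
    omega
  rw [μ.hookProd_eq_firstRowHookProd_mul, hookProd_eq_one_of_card_eq_zero _ hdrop, mul_one,
    firstRowHookProd, range_eq_Ico, prod_hookLength_Ico_of_colLen_eq le_rfl one_pos hcol,
    add_tsub_cancel_right, Nat.sub_zero, descFactorial_self]

theorem card_eq_of_rowLen_one_eq_zero (h : μ.rowLen 1 = 0) : μ.card = μ.rowLen 0 := by
  have := μ.card_eq_rowLen_add_card_dropFirstRow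
  have : μ.dropFirstRow.card = 0 := card_eq_zero_of_rowLen_zero (by simpa using h)
  omega

theorem hookProd_eq_of_rowLen_one_le_one (h0 : 0 < μ.rowLen 0) (h : μ.rowLen 1 ≤ 1) :
    μ.hookProd = μ.card * (μ.rowLen 0 - 1)! * (μ.card - μ.rowLen 0)! := by
  have hcol : ∀ j ∈ Ico 1 (μ.rowLen 0), μ.colLen j = 1 := fun j hj => by
    have := mem_Ico.1 hj
    have := colLen_pos this.2
    have := (lt_colLen_iff_lt_rowLen (μ := μ) (i := 1) (j := j)).not.2 (by omega)
    omega
  have hcard : μ.card = μ.colLen 0 + (μ.rowLen 0 - 1) := by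
    rw [← sum_colLen_eq_card, range_eq_Ico, sum_eq_sum_Ico_succ_bot h0, sum_congr rfl hcol,
      sum_const, card_Ico, smul_eq_mul, mul_one]
  have hdrop : μ.dropFirstRow.colLen 1 = 0 := by
    have := (lt_colLen_iff_lt_rowLen (μ := μ) (i := 1) (j := 1)).not.2 (by omega)
    rw [colLen_dropFirstRow]
    omega
  rw [μ.hookProd_eq_firstRowHookProd_mul, hookProd_eq_factorial_of_colLen_one_eq_zero hdrop,
    card_dropFirstRow, firstRowHookProd, range_eq_Ico, prod_eq_prod_Ico_succ_bot h0,
    prod_hookLength_Ico_of_colLen_eq le_rfl one_pos hcol, hookLength_row_zero,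
    show μ.rowLen 0 + 1 - 1 - 1 = μ.rowLen 0 - 1 by omega, descFactorial_self,
    show μ.rowLen 0 - 0 + μ.colLen 0 - 1 = μ.card by omega]

theorem hookProd_eq_of_rowLen_two_eq_zero (h : μ.rowLen 2 = 0) :
    μ.hookProd = (μ.rowLen 0 + 1).descFactorial (μ.rowLen 1) * (μ.rowLen 0 - μ.rowLen 1)!
      * (μ.rowLen 1)! := by
  have hed : μ.rowLen 1 ≤ μ.rowLen 0 := μ.rowLen_anti 0 1 zero_le_one
  have hcol : ∀ j < μ.rowLen 0, μ.colLen j = if j < μ.rowLen 1 then 2 else 1 := fun j hj => by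
    have := colLen_pos hj
    have := lt_colLen_iff_lt_rowLen (μ := μ) (i := 1) (j := j)
    have := (lt_colLen_iff_lt_rowLen (μ := μ) (i := 2) (j := j)).not.2 (by omega)
    split_ifs <;> omega
  have hdrop : μ.dropFirstRow.hookProd = (μ.rowLen 1)! := by
    rw [hookProd_eq_factorial_of_rowLen_one_eq_zero (by simpa using h), rowLen_dropFirstRow]
  rw [μ.hookProd_eq_firstRowHookProd_mul, hdrop, firstRowHookProd,
    ← prod_range_mul_prod_Ico _ hed, range_eq_Ico,
    prod_hookLength_Ico_of_colLen_eq hed two_pos fun j hj => by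
      simp only [mem_Ico] at hj; simp [hcol j (by omega), hj.2],
    prod_hookLength_Ico_of_colLen_eq le_rfl one_pos fun j hj => by
      simp only [mem_Ico] at hj; simp [hcol j hj.2, Nat.not_lt.2 hj.1],
    show μ.rowLen 0 + 1 - 1 - μ.rowLen 1 = μ.rowLen 0 - μ.rowLen 1 by omega, descFactorial_self]
  rfl

theorem card_eq_of_rowLen_two_eq_zero (h : μ.rowLen 2 = 0) :
    μ.card = μ.rowLen 0 + μ.rowLen 1 := by
  rw [μ.card_eq_rowLen_add_card_dropFirstRow, card_eq_of_rowLen_one_eq_zero (by simpa using h),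
    rowLen_dropFirstRow]

theorem hookProd_dvd_factorial (h : μ.rowLen 1 ≤ 1 ∨ μ.rowLen 2 = 0) :
    μ.hookProd ∣ μ.card ! := by
  rcases Nat.eq_zero_or_pos (μ.rowLen 0) with h0 | h0
  · rw [hookProd_eq_one_of_card_eq_zero μ (card_eq_zero_of_rowLen_zero h0)]
    exact one_dvd _
  have hdn := μ.rowLen_zero_le_card
  rcases le_or_gt (μ.rowLen 1) 1 with h1 | h1
  · rw [hookProd_eq_of_rowLen_one_le_one h0 h1,
      ← mul_factorial_pred (show μ.card ≠ 0 by omega), mul_assoc]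
    refine mul_dvd_mul_left _ ?_
    have := factorial_mul_factorial_dvd_factorial (show μ.rowLen 0 - 1 ≤ μ.card - 1 by omega)
    rwa [show μ.card - 1 - (μ.rowLen 0 - 1) = μ.card - μ.rowLen 0 by omega] at this
  · have h2 := h.resolve_left (by omega)
    rw [hookProd_eq_of_rowLen_two_eq_zero h2, card_eq_of_rowLen_two_eq_zero h2]
    exact Nat.descFactorial_mul_factorial_mul_factorial_dvd (by omega)
      (μ.rowLen_anti 0 1 zero_le_one)

theorem two_mul_hookProd_le_factorial {μ : YoungDiagram} (h1 : 1 < μ.rowLen 0)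
    (h2 : 0 < μ.rowLen 1) : 2 * μ.hookProd ≤ μ.card ! := by
  have hμ : μ.card ≠ 0 := by have := μ.rowLen_zero_le_card; omega
  by_cases hshape : μ.rowLen 1 ≤ 1 ∨ μ.rowLen 2 = 0
  · obtain ⟨k, hk⟩ := hookProd_dvd_factorial hshape
    have hlt := hookProd_lt_factorial h1 h2
    rw [hk] at hlt ⊢
    rw [mul_comm]
    refine Nat.mul_le_mul_left _ (Nat.lt_of_not_le fun hk1 => ?_)
    interval_cases k <;> simp at hlt
  simp only [not_or, not_le, ← pos_iff_ne_zero] at hshape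
  calc 2 * μ.hookProd = μ.firstRowHookProd * (2 * μ.dropFirstRow.hookProd) := by
        rw [μ.hookProd_eq_firstRowHookProd_mul]; ring
    _ ≤ μ.card.descFactorial (μ.rowLen 0) * μ.dropFirstRow.card ! :=
        Nat.mul_le_mul μ.firstRowHookProd_le_descFactorial
          (two_mul_hookProd_le_factorial (by simpa using hshape.1) (by simpa using hshape.2))
    _ = μ.card ! := μ.descFactorial_mul_factorial_card_dropFirstRow
termination_by μ.card
decreasing_by exact card_dropFirstRow_lt hμ

variable (μ)

theorem prod_one_add_colLen_sub_one_div_le :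
    ∏ i ∈ Icc 1 (μ.rowLen 0), (1 + ((μ.colLen (μ.rowLen 0 - i) : ℝ) - 1) / i)
      ≤ ((μ.card : ℝ) / μ.rowLen 0) ^ μ.rowLen 0 := by
  have hcol (i : ℕ) (hi : i ∈ Icc 1 (μ.rowLen 0)) : (1 : ℝ) ≤ μ.colLen (μ.rowLen 0 - i) := by
    have := mem_Icc.1 hi
    exact_mod_cast colLen_pos (by omega)
  calc ∏ i ∈ Icc 1 (μ.rowLen 0), (1 + ((μ.colLen (μ.rowLen 0 - i) : ℝ) - 1) / i)
      ≤ ∏ i ∈ Icc 1 (μ.rowLen 0), (μ.colLen (μ.rowLen 0 - i) : ℝ) := by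
        refine prod_le_prod (fun i hi => ?_) fun i hi => ?_
        · have := hcol i hi
          positivity
        · have := div_le_self (sub_nonneg.2 (hcol i hi))
            (by exact_mod_cast (mem_Icc.1 hi).1 : (1 : ℝ) ≤ i)
          linarith
    _ ≤ ((∑ i ∈ Icc 1 (μ.rowLen 0), (μ.colLen (μ.rowLen 0 - i) : ℝ))
          / #(Icc 1 (μ.rowLen 0))) ^ #(Icc 1 (μ.rowLen 0)) :=
        Real.prod_le_mean_pow _ _ fun _ _ => cast_nonneg _
    _ = ((μ.card : ℝ) / μ.rowLen 0) ^ μ.rowLen 0 := by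
        rw [sum_Icc_one_reflect (fun j => (μ.colLen j : ℝ)), ← cast_sum, sum_colLen_eq_card,
          card_Icc, add_tsub_cancel_right]

theorem firstRowHookProd_eq_factorial_mul_prod :
    (μ.firstRowHookProd : ℝ) = (μ.rowLen 0)!
      * ∏ i ∈ Icc 1 (μ.rowLen 0), (1 + ((μ.colLen (μ.rowLen 0 - i) : ℝ) - 1) / i) := by
  rw [firstRowHookProd, ← prod_Icc_one_reflect, ← prod_Ico_id_eq_factorial,
    Ico_add_one_right_eq_Icc, cast_prod, cast_prod, ← prod_mul_distrib]
  refine prod_congr rfl fun i hi => ?_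
  have hi := mem_Icc.1 hi
  have hc := colLen_pos (μ := μ) (j := μ.rowLen 0 - i) (by omega)
  rw [hookLength_row_zero, show μ.rowLen 0 - (μ.rowLen 0 - i) + μ.colLen (μ.rowLen 0 - i) - 1
    = i + (μ.colLen (μ.rowLen 0 - i) - 1) by omega]
  have : (i : ℝ) ≠ 0 := by exact_mod_cast (by omega : i ≠ 0)
  push_cast [Nat.cast_sub hc]
  field_simp

theorem choose_mul_pow_mul_firstRowHookProd_le :
    (μ.card.choose (μ.rowLen 0) : ℝ) * ((μ.rowLen 0 : ℝ) / μ.card) ^ μ.rowLen 0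
      * μ.firstRowHookProd ≤ μ.card.descFactorial (μ.rowLen 0) := by
  set d := μ.rowLen 0
  set n := μ.card
  have hratio : ((d : ℝ) / n * (n / d)) ^ d ≤ 1 := by
    refine pow_le_one₀ (by positivity) ?_
    rw [_root_.div_mul_div_comm, mul_comm (d : ℝ)]
    exact div_self_le_one _
  rw [firstRowHookProd_eq_factorial_mul_prod, descFactorial_eq_factorial_mul_choose, cast_mul]
  calc (n.choose d : ℝ) * ((d : ℝ) / n) ^ d
        * (d ! * ∏ i ∈ Icc 1 d, (1 + ((μ.colLen (d - i) : ℝ) - 1) / i))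
      ≤ (n.choose d : ℝ) * ((d : ℝ) / n) ^ d * (d ! * ((n : ℝ) / d) ^ d) := by
        gcongr
        exact μ.prod_one_add_colLen_sub_one_div_le
    _ = d ! * n.choose d * ((d : ℝ) / n * (n / d)) ^ d := by ring
    _ ≤ d ! * n.choose d := mul_le_of_le_one_right (by positivity) hratio

theorem mul_mul_hookProd_le_factorial {x y : ℝ} (hy : 0 ≤ y)
    (hx : x * μ.firstRowHookProd ≤ μ.card.descFactorial (μ.rowLen 0))
    (hdrop : y * μ.dropFirstRow.hookProd ≤ μ.dropFirstRow.card !) :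
    x * y * μ.hookProd ≤ μ.card ! := by
  calc x * y * μ.hookProd = (x * μ.firstRowHookProd) * (y * μ.dropFirstRow.hookProd) := by
        rw [hookProd_eq_firstRowHookProd_mul, cast_mul]; ring
    _ ≤ μ.card.descFactorial (μ.rowLen 0) * μ.dropFirstRow.card ! :=
        mul_le_mul hx hdrop (by positivity) (by positivity)
    _ = μ.card ! := by exact_mod_cast μ.descFactorial_mul_factorial_card_dropFirstRow

end YoungDiagram

theorem stmt2_general (μ : YoungDiagram) (n d : ℕ) (hn : μ.card = n) (hd : d = μ.rowLen 0) :
    (∏ i ∈ Finset.Icc 1 d, (1 + ((μ.colLen (d - i) : ℝ) - 1) / (i : ℝ)))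
      ≤ ((n : ℝ) / (d : ℝ)) ^ d ∧
    (n.choose d : ℝ) * ((d : ℝ) / (n : ℝ)) ^ d ≤ (μ.dimIrrep : ℝ) := by
  subst hn hd
  refine ⟨μ.prod_one_add_colLen_sub_one_div_le, ?_⟩
  have hx := μ.choose_mul_pow_mul_firstRowHookProd_le
  show _ ≤ ((μ.card ! / μ.hookProd : ℕ) : ℝ)
  by_cases hshape : μ.rowLen 1 ≤ 1 ∨ μ.rowLen 2 = 0
  · refine le_cast_div_of_dvd_of_mul_le μ.hookProd_pos (μ.hookProd_dvd_factorial hshape) ?_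
    simpa using μ.mul_mul_hookProd_le_factorial zero_le_one hx
      (by simpa using μ.dropFirstRow.hookProd_le_factorial)
  · simp only [not_or, not_le, ← pos_iff_ne_zero] at hshape
    have h2 := YoungDiagram.two_mul_hookProd_le_factorial (μ := μ.dropFirstRow)
      (by simpa using hshape.1) (by simpa using hshape.2)
    have := μ.mul_mul_hookProd_le_factorial zero_le_two hx (by exact_mod_cast h2)
    exact le_cast_div_of_two_mul_le μ.hookProd_pos μ.hookProd_le_factorial (by linarith)

/-- Let `μ` be a Young diagram with `n` cells whose first row has length `d`, and let
`c_i = colLen (d-i)` be the column lengths in reverse order.  Then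
`∏_{i=1}^{d} (1 + (c_i - 1)/i) ≤ (n/d)^d`, and consequently
`dim π_μ ≥ C(n,d) · (d/n)^d`. -/
theorem stmt2 (μ : YoungDiagram) (n d : ℕ) (hn : μ.card = n) (hd : d = μ.rowLen 0)
    (hdpos : 0 < d) :
    (∏ i ∈ Finset.Icc 1 d, (1 + ((μ.colLen (d - i) : ℝ) - 1) / (i : ℝ)))
      ≤ ((n : ℝ) / (d : ℝ)) ^ d ∧
    (n.choose d : ℝ) * ((d : ℝ) / (n : ℝ)) ^ d ≤ (μ.dimIrrep : ℝ) :=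
  stmt2_general μ n d hn hd
end

section
/- The associated graded algebra gr(ℂ[S_n]) of the group algebra of S_n (with respect to the filtration placing transpositions in degree 1), presented by generators s_{ij} (1 ≤ i < j ≤ n) with relations s_{ij}² = 0, s_{ij}s_{jk} = s_{ik}s_{ij} (distinct i,j,k), and s_{ij}s_{kl} = s_{kl}s_{ij} (distinct i,j,k,l), has dimension n!, with a basis given by ordered monomials s_{i_1 j_1}⋯s_{i_m j_m} in which max(i_l, j_l) strictly increases from left to right. -/
/-- Generators `s_{ij}`, `1 ≤ i < j ≤ n`, of the associated graded of `ℂ[S_n]`. -/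
def SGen (n : ℕ) : Type := {p : Fin n × Fin n // p.1 < p.2}

/-- `s_{ij}` for arbitrary distinct `i, j` (with `s_{ij} = s_{ji}`), as an element of the
free algebra on the generators. -/
noncomputable def sgen {n : ℕ} (i j : Fin n) (h : i ≠ j) : FreeAlgebra ℂ (SGen n) :=
  if hij : i < j then FreeAlgebra.ι ℂ ⟨(i, j), hij⟩
  else FreeAlgebra.ι ℂ ⟨(j, i), h.lt_or_gt.resolve_left hij⟩

/-- The homogenized defining relations of `gr ℂ[S_n]`:
`s_{ij}² = 0`, `s_{ij}s_{jk} = s_{ik}s_{ij}` (distinct `i,j,k`), and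
`s_{ij}s_{kl} = s_{kl}s_{ij}` (distinct `i,j,k,l`). -/
inductive grRel (n : ℕ) : FreeAlgebra ℂ (SGen n) → FreeAlgebra ℂ (SGen n) → Prop
  | sq (i j : Fin n) (h : i ≠ j) : grRel n (sgen i j h * sgen i j h) 0
  | braid (i j k : Fin n) (hij : i ≠ j) (hjk : j ≠ k) (hik : i ≠ k) :
      grRel n (sgen i j hij * sgen j k hjk) (sgen i k hik * sgen i j hij)
  | comm (i j k l : Fin n) (hij : i ≠ j) (hkl : k ≠ l) (hik : i ≠ k) (hil : i ≠ l)
      (hjk : j ≠ k) (hjl : j ≠ l) :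
      grRel n (sgen i j hij * sgen k l hkl) (sgen k l hkl * sgen i j hij)

/-- The index set of ordered monomials `s_{i_1 j_1}⋯s_{i_m j_m}` in which
`max(i_l, j_l) = j_l` strictly increases from left to right. -/
def OrderedWords (n : ℕ) : Type :=
  {l : List (SGen n) // List.Chain' (fun p q => p.1.2 < q.1.2) l}

/-!
The ordered monomials span because the relations straighten every product of generators.

They are independent because the algebra acts on `ℂ[Sₙ]` as the associated graded of the left
regular representation for the filtration by `n - #cycles`: left multiplication by a
transposition `τ` changes the number of cycles by one, and `s_τ` sends `σ` to `τσ` when `τ`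
merges two cycles of `σ`, to `0` otherwise. Two such steps survive iff the number of cycles drops
by two, which depends only on the product of the transpositions; hence the homogenized relations
hold. In an ordered monomial every letter merges two cycles, so it sends `1` to the product `σ` of
its transpositions, and the monomial can be read off from `σ` letter by letter from the right.
So ordered monomials are also in bijection with `Sₙ`.
-/

open Equiv Finset

theorem Finset.card_image_univ_le_of_factorsThrough {α β γ : Type*} [Fintype α]
    [DecidableEq β] [DecidableEq γ] {f : α → β} {g : α → γ} (h : f.FactorsThrough g) :
    #(univ.image f) ≤ #(univ.image g) := by
  rcases isEmpty_or_nonempty α with hα | hα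
  · simp
  refine card_le_card_of_injOn (g ∘ Function.invFun f)
    (fun _ _ => mem_image_of_mem _ (mem_univ _)) ?_
  intro b hb b' hb' hbb'
  obtain ⟨x, -, rfl⟩ := mem_image.1 hb
  obtain ⟨x', -, rfl⟩ := mem_image.1 hb'
  rw [← Function.invFun_eq (f := f) ⟨x, rfl⟩, ← Function.invFun_eq (f := f) ⟨x', rfl⟩]
  exact h hbb'

namespace Equiv.Perm

theorem SameCycle.eq_of_forall_apply_eq {α β : Type*} [Finite α] {σ : Perm α} {x y : α}
    {L : α → β} (hL : ∀ z, L (σ z) = L z) (h : σ.SameCycle x y) : L x = L y := by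
  obtain ⟨k, rfl⟩ := h.exists_nat_pow_eq
  clear h
  induction k with
  | zero => rfl
  | succ k ih => rw [pow_succ', mul_apply, hL, ih]

theorem SameCycle.sameCycle_swap_apply {α : Type*} [DecidableEq α] {σ : Perm α} {i j : α}
    (h : σ.SameCycle i j) (z : α) :
    σ.SameCycle z (swap i j z) := by
  rcases eq_or_ne z i with rfl | hi
  · rwa [swap_apply_left]
  rcases eq_or_ne z j with rfl | hj
  · rw [swap_apply_right]; exact h.symm
  · rw [swap_apply_of_ne_of_ne hi hj]

variable {α : Type*} [Fintype α] [DecidableEq α] {σ : Perm α} {i j x y : α}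

def sameCycleClass (σ : Perm α) (x : α) : Finset α := {y | σ.SameCycle x y}

theorem sameCycleClass_eq_iff : σ.sameCycleClass x = σ.sameCycleClass y ↔ σ.SameCycle x y := by
  refine ⟨fun h => ?_, fun h => ?_⟩
  · have : y ∈ σ.sameCycleClass y := mem_filter.2 ⟨mem_univ _, SameCycle.refl _ _⟩
    rw [← h] at this
    simpa [sameCycleClass] using this
  · ext z
    simp only [sameCycleClass, mem_filter, mem_univ, true_and]
    exact ⟨h.symm.trans, h.trans⟩

theorem sameCycleClass_apply : σ.sameCycleClass (σ x) = σ.sameCycleClass x :=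
  sameCycleClass_eq_iff.2 (sameCycle_apply_left.2 (SameCycle.refl _ _))

def numCycles (σ : Perm α) : ℕ := #(univ.image σ.sameCycleClass)

def mergedClass (σ : Perm α) (i j x : α) : Finset α :=
  if σ.SameCycle j x then σ.sameCycleClass i else σ.sameCycleClass x

theorem mergedClass_swap_mul_apply (x : α) :
    σ.mergedClass i j ((swap i j * σ) x) = σ.mergedClass i j x := by
  have key : ∀ z, σ.mergedClass i j (swap i j z) = σ.mergedClass i j z := by
    intro z
    rcases eq_or_ne z i with rfl | hzi
    · simp only [mergedClass, swap_apply_left, SameCycle.refl, if_true]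
      split_ifs <;> simp_all
    rcases eq_or_ne z j with rfl | hzj
    · simp only [mergedClass, swap_apply_right, SameCycle.refl, if_true]
      split_ifs <;> simp_all
    rw [swap_apply_of_ne_of_ne hzi hzj]
  rw [mul_apply, key]
  simp only [mergedClass, sameCycle_apply_right, sameCycleClass_apply]

theorem SameCycle.mergedClass_eq (h : (swap i j * σ).SameCycle x y) :
    σ.mergedClass i j x = σ.mergedClass i j y :=
  h.eq_of_forall_apply_eq mergedClass_swap_mul_apply

theorem numCycles_le_numCycles_swap_mul (σ : Perm α) (i j : α) :
    σ.numCycles ≤ (swap i j * σ).numCycles + 1 := by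
  have hsub : univ.image σ.sameCycleClass ⊆
      insert (σ.sameCycleClass j) (univ.image (σ.mergedClass i j)) := by
    intro c hc
    obtain ⟨x, -, rfl⟩ := mem_image.1 hc
    by_cases hx : σ.SameCycle j x
    · exact mem_insert.2 (Or.inl (sameCycleClass_eq_iff.2 hx.symm))
    · exact mem_insert_of_mem (mem_image.2 ⟨x, mem_univ _, if_neg hx⟩)
  calc σ.numCycles ≤ #(univ.image (σ.mergedClass i j)) + 1 :=
        (card_le_card hsub).trans (card_insert_le _ _)
    _ ≤ (swap i j * σ).numCycles + 1 := by
        gcongr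
        exact card_image_univ_le_of_factorsThrough fun x y hxy =>
          (sameCycleClass_eq_iff.1 hxy).mergedClass_eq

theorem sameCycle_swap_mul_of_not_sameCycle (h : ¬σ.SameCycle i j) :
    (swap i j * σ).SameCycle i j := by
  set ρ := swap i j * σ
  by_contra hρ
  -- the `σ`-orbit of `j` cannot leave the `ρ`-orbit of `j`, which avoids `i`
  have horbit : ∀ k : ℕ, ρ.SameCycle j ((σ ^ k) j) := by
    intro k
    induction k with
    | zero => exact SameCycle.refl _ _
    | succ k ih =>
      have hσ : (σ ^ (k + 1)) j = swap i j (ρ ((σ ^ k) j)) := by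
        rw [pow_succ', mul_apply]
        simp [ρ]
      have hstep : ρ.SameCycle j (ρ ((σ ^ k) j)) := ih.trans (sameCycle_apply_right.2 (.refl _ _))
      rw [hσ]
      rcases eq_or_ne (ρ ((σ ^ k) j)) i with hi | hi
      · exact absurd (hi ▸ hstep).symm hρ
      rcases eq_or_ne (ρ ((σ ^ k) j)) j with hj | hj
      · refine absurd (show σ.SameCycle j i from ⟨(k + 1 : ℕ), ?_⟩).symm h
        rw [zpow_natCast, hσ, hj, swap_apply_right]
      · rwa [swap_apply_of_ne_of_ne hi hj]
  obtain ⟨k, hk⟩ := (show σ.SameCycle j (σ⁻¹ j) from ⟨-1, by simp⟩).exists_nat_pow_eq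
  have hρk : ρ (σ⁻¹ j) = i := by simp [ρ]
  exact hρ ((horbit k).trans (hk ▸ hρk ▸ sameCycle_apply_right.2 (.refl _ _))).symm

theorem SameCycle.swap_mul_of_not_sameCycle (hij : ¬σ.SameCycle i j) (h : σ.SameCycle x y) :
    (swap i j * σ).SameCycle x y := by
  set ρ := swap i j * σ
  refine sameCycleClass_eq_iff.1 (h.eq_of_forall_apply_eq fun z => sameCycleClass_eq_iff.2 ?_)
  have hσz : σ z = swap i j (ρ z) := by simp [ρ]
  rw [hσz]
  exact ((sameCycle_swap_mul_of_not_sameCycle hij).sameCycle_swap_apply _).symm.trans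
    (sameCycle_apply_left.2 (.refl _ _))

theorem sameCycle_swap_mul_of_mergedClass_eq (hij : ¬σ.SameCycle i j)
    (h : σ.mergedClass i j x = σ.mergedClass i j y) : (swap i j * σ).SameCycle x y := by
  have hρ := sameCycle_swap_mul_of_not_sameCycle hij
  simp only [mergedClass] at h
  split_ifs at h with hx hy hy
  · exact (hx.symm.trans hy).swap_mul_of_not_sameCycle hij
  · exact (hx.symm.swap_mul_of_not_sameCycle hij).trans
      (hρ.symm.trans ((sameCycleClass_eq_iff.1 h).swap_mul_of_not_sameCycle hij))
  · exact ((sameCycleClass_eq_iff.1 h).swap_mul_of_not_sameCycle hij).trans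
      (hρ.trans (hy.swap_mul_of_not_sameCycle hij))
  · exact (sameCycleClass_eq_iff.1 h).swap_mul_of_not_sameCycle hij

theorem image_mergedClass_of_not_sameCycle (hij : ¬σ.SameCycle i j) :
    univ.image (σ.mergedClass i j) = (univ.image σ.sameCycleClass).erase (σ.sameCycleClass j) := by
  ext c
  simp only [mem_image, mem_univ, true_and, mem_erase, mergedClass]
  constructor
  · rintro ⟨x, rfl⟩
    split_ifs with hx
    · exact ⟨fun h => hij (sameCycleClass_eq_iff.1 h), i, rfl⟩
    · exact ⟨fun h => hx (sameCycleClass_eq_iff.1 h).symm, x, rfl⟩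
  · rintro ⟨hc, x, rfl⟩
    exact ⟨x, if_neg fun hx => hc (sameCycleClass_eq_iff.2 hx.symm)⟩

theorem numCycles_swap_mul_add_one (h : ¬σ.SameCycle i j) :
    (swap i j * σ).numCycles + 1 = σ.numCycles := by
  have hle : (swap i j * σ).numCycles ≤ #(univ.image (σ.mergedClass i j)) :=
    card_image_univ_le_of_factorsThrough fun _ _ hxy =>
      sameCycleClass_eq_iff.2 (sameCycle_swap_mul_of_mergedClass_eq h hxy)
  rw [image_mergedClass_of_not_sameCycle h,
    card_erase_of_mem (mem_image_of_mem _ (mem_univ j))] at hle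
  change _ ≤ σ.numCycles - 1 at hle
  have hpos : 0 < σ.numCycles := card_pos.2 ⟨_, mem_image_of_mem _ (mem_univ j)⟩
  have := numCycles_le_numCycles_swap_mul σ i j
  omega

variable {R : Type*} [CommSemiring R]

theorem numCycles_le_numCycles_mul_add_one {τ : Perm α} (hτ : τ.IsSwap) (σ : Perm α) :
    σ.numCycles ≤ (τ * σ).numCycles + 1 := by
  obtain ⟨i, j, -, rfl⟩ := hτ
  exact numCycles_le_numCycles_swap_mul σ i j

/-- Left multiplication by `τ` in the associated graded of `R[Perm α]` for the filtration by
`Fintype.card α - numCycles`: it keeps only the terms whose filtration degree goes up by one. -/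
noncomputable def gradedMulLeft (τ : Perm α) : Module.End R (Perm α →₀ R) :=
  Finsupp.lsum R fun σ =>
    if (τ * σ).numCycles + 1 = σ.numCycles then Finsupp.lsingle (τ * σ) else 0

theorem gradedMulLeft_single (τ σ : Perm α) (c : R) :
    gradedMulLeft τ (Finsupp.single σ c) =
      if (τ * σ).numCycles + 1 = σ.numCycles then Finsupp.single (τ * σ) c else 0 := by
  rw [gradedMulLeft, Finsupp.lsum_single]
  split_ifs <;> rfl

theorem gradedMulLeft_mul_gradedMulLeft_single {τ₁ τ₂ : Perm α} (h₁ : τ₁.IsSwap)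
    (h₂ : τ₂.IsSwap) (σ : Perm α) (c : R) :
    gradedMulLeft τ₁ (gradedMulLeft τ₂ (Finsupp.single σ c)) =
      if (τ₁ * τ₂ * σ).numCycles + 2 = σ.numCycles then Finsupp.single (τ₁ * τ₂ * σ) c
      else 0 := by
  have hle₁ := numCycles_le_numCycles_mul_add_one h₁ (τ₂ * σ)
  have hle₂ := numCycles_le_numCycles_mul_add_one h₂ σ
  rw [mul_assoc, gradedMulLeft_single]
  by_cases h : (τ₂ * σ).numCycles + 1 = σ.numCycles
  · rw [if_pos h, gradedMulLeft_single]
    by_cases h' : (τ₁ * (τ₂ * σ)).numCycles + 1 = (τ₂ * σ).numCycles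
    · rw [if_pos h', if_pos (by omega)]
    · rw [if_neg h', if_neg (by omega)]
  · rw [if_neg h, map_zero, if_neg (by omega)]

theorem gradedMulLeft_mul_gradedMulLeft_eq {τ₁ τ₂ τ₁' τ₂' : Perm α} (h₁ : τ₁.IsSwap)
    (h₂ : τ₂.IsSwap) (h₁' : τ₁'.IsSwap) (h₂' : τ₂'.IsSwap) (h : τ₁ * τ₂ = τ₁' * τ₂') :
    (gradedMulLeft τ₁ * gradedMulLeft τ₂ : Module.End R (Perm α →₀ R)) =
      gradedMulLeft τ₁' * gradedMulLeft τ₂' := by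
  refine Finsupp.lhom_ext fun σ c => ?_
  rw [Module.End.mul_apply, Module.End.mul_apply, gradedMulLeft_mul_gradedMulLeft_single h₁ h₂,
    gradedMulLeft_mul_gradedMulLeft_single h₁' h₂', h]

theorem gradedMulLeft_mul_self {τ : Perm α} (hτ : τ.IsSwap) :
    (gradedMulLeft τ * gradedMulLeft τ : Module.End R (Perm α →₀ R)) = 0 := by
  refine Finsupp.lhom_ext fun σ c => ?_
  rw [Module.End.mul_apply, gradedMulLeft_mul_gradedMulLeft_single hτ hτ]
  obtain ⟨i, j, -, rfl⟩ := hτ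
  rw [swap_mul_self, one_mul, if_neg (by omega)]
  rfl

end Equiv.Perm

section Words

variable {n : ℕ}

def SGen.of (i j : Fin n) (h : i < j) : SGen n := ⟨(i, j), h⟩

theorem SGen.exists_eq_of (g : SGen n) : ∃ i j : Fin n, ∃ h : i < j, g = SGen.of i j h :=
  ⟨_, _, g.2, rfl⟩

def SGen.toPerm (g : SGen n) : Perm (Fin n) := swap g.1.1 g.1.2

@[simp] theorem SGen.toPerm_of {i j : Fin n} (h : i < j) : (SGen.of i j h).toPerm = swap i j :=
  rfl

def wordPerm (w : List (SGen n)) : Perm (Fin n) := (w.map SGen.toPerm).prod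

@[simp] theorem wordPerm_nil : wordPerm ([] : List (SGen n)) = 1 := rfl

@[simp] theorem wordPerm_cons (g : SGen n) (w : List (SGen n)) :
    wordPerm (g :: w) = g.toPerm * wordPerm w := by
  simp [wordPerm]

@[simp] theorem wordPerm_append_singleton (w : List (SGen n)) (g : SGen n) :
    wordPerm (w ++ [g]) = wordPerm w * g.toPerm := by
  simp [wordPerm]

def IsOrderedWord (w : List (SGen n)) : Prop := w.Pairwise fun p q => p.1.2 < q.1.2

theorem isOrderedWord_iff_isChain {w : List (SGen n)} :
    IsOrderedWord w ↔ w.IsChain fun p q => p.1.2 < q.1.2 := by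
  rw [IsOrderedWord, ← List.pairwise_map (f := fun p : SGen n => p.1.2),
    ← List.isChain_iff_pairwise, List.isChain_map]

theorem eq_of_sameCycle_wordPerm {w : List (SGen n)} (hw : IsOrderedWord w) {x y : Fin n}
    (h : (wordPerm w).SameCycle x y) (hx : ∀ q ∈ w, q.1.2 ≠ x) (hy : ∀ q ∈ w, q.1.2 ≠ y) :
    x = y := by
  induction w generalizing x y with
  | nil => simpa using h
  | cons g w ih =>
    rw [IsOrderedWord, List.pairwise_cons] at hw
    have hg : ∀ q ∈ w, q.1.2 ≠ g.1.2 := fun q hq => (hw.1 q hq).ne'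
    have hmerged := Perm.SameCycle.mergedClass_eq (σ := wordPerm w) (by simpa [SGen.toPerm] using h)
    -- neither `x` nor `y` lies in the cycle of `g.1.2`, so merging did not affect them
    have hfar : ∀ z, (∀ q ∈ g :: w, q.1.2 ≠ z) → ¬(wordPerm w).SameCycle g.1.2 z := by
      intro z hz hgz
      exact hz g List.mem_cons_self (ih hw.2 hgz hg fun q hq => hz q (List.mem_cons_of_mem g hq))
    rw [Perm.mergedClass, Perm.mergedClass, if_neg (hfar x hx), if_neg (hfar y hy)] at hmerged
    exact ih hw.2 (Perm.sameCycleClass_eq_iff.1 hmerged)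
      (fun q hq => hx q (List.mem_cons_of_mem g hq)) fun q hq => hy q (List.mem_cons_of_mem g hq)

theorem not_sameCycle_wordPerm {g : SGen n} {w : List (SGen n)} (hw : IsOrderedWord (g :: w)) :
    ¬(wordPerm w).SameCycle g.1.1 g.1.2 := by
  rw [IsOrderedWord, List.pairwise_cons] at hw
  exact fun h => g.2.ne (eq_of_sameCycle_wordPerm hw.2 h (fun q hq => (g.2.trans (hw.1 q hq)).ne')
    fun q hq => (hw.1 q hq).ne')

theorem wordPerm_apply_of_forall_lt {w : List (SGen n)} {x : Fin n} (h : ∀ q ∈ w, q.1.2 < x) :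
    wordPerm w x = x := by
  induction w with
  | nil => rfl
  | cons g w ih =>
    have hg := h g List.mem_cons_self
    rw [wordPerm_cons, Perm.mul_apply, ih fun q hq => h q (List.mem_cons_of_mem g hq), SGen.toPerm,
      swap_apply_of_ne_of_ne (g.2.trans hg).ne' hg.ne']

theorem IsOrderedWord.of_append_singleton {w : List (SGen n)} {g : SGen n}
    (hw : IsOrderedWord (w ++ [g])) : IsOrderedWord w ∧ ∀ q ∈ w, q.1.2 < g.1.2 := by
  simpa [IsOrderedWord, List.pairwise_append] using hw

section LastLetter

variable {w : List (SGen n)} {g : SGen n}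

theorem wordPerm_append_singleton_apply_of_lt (hw : ∀ q ∈ w, q.1.2 < g.1.2) {x : Fin n}
    (hx : g.1.2 < x) : wordPerm (w ++ [g]) x = x := by
  rw [wordPerm_append_singleton, Perm.mul_apply, SGen.toPerm,
    swap_apply_of_ne_of_ne (g.2.trans hx).ne' hx.ne',
    wordPerm_apply_of_forall_lt fun q hq => (hw q hq).trans hx]

theorem wordPerm_append_singleton_apply_fst (hw : ∀ q ∈ w, q.1.2 < g.1.2) :
    wordPerm (w ++ [g]) g.1.1 = g.1.2 := by
  rw [wordPerm_append_singleton, Perm.mul_apply, SGen.toPerm, swap_apply_left,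
    wordPerm_apply_of_forall_lt hw]

theorem wordPerm_append_singleton_apply_snd_ne (hw : ∀ q ∈ w, q.1.2 < g.1.2) :
    wordPerm (w ++ [g]) g.1.2 ≠ g.1.2 := by
  conv_rhs => rw [← wordPerm_append_singleton_apply_fst hw]
  exact (wordPerm (w ++ [g])).injective.ne g.2.ne'

end LastLetter

/-- The last letter `(i, j)` of an ordered word is read off from its permutation `σ`:
`j` is the largest point moved by `σ` and `i = σ⁻¹ j`. -/
theorem eq_of_wordPerm_append_singleton_eq {w w' : List (SGen n)} {g g' : SGen n}
    (hw : ∀ q ∈ w, q.1.2 < g.1.2) (hw' : ∀ q ∈ w', q.1.2 < g'.1.2)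
    (h : wordPerm (w ++ [g]) = wordPerm (w' ++ [g'])) : g = g' := by
  have hsnd : g.1.2 = g'.1.2 := by
    rcases lt_trichotomy g.1.2 g'.1.2 with hlt | heq | hgt
    · exact absurd (h ▸ wordPerm_append_singleton_apply_of_lt hw hlt)
        (wordPerm_append_singleton_apply_snd_ne hw')
    · exact heq
    · exact absurd (h ▸ wordPerm_append_singleton_apply_of_lt hw' hgt)
        (wordPerm_append_singleton_apply_snd_ne hw)
  have hfst : g.1.1 = g'.1.1 := (wordPerm (w ++ [g])).injective <| by
    rw [wordPerm_append_singleton_apply_fst hw, h, wordPerm_append_singleton_apply_fst hw']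
    exact hsnd
  exact Subtype.ext (Prod.ext hfst hsnd)

theorem wordPerm_injOn : Set.InjOn wordPerm {w : List (SGen n) | IsOrderedWord w} := by
  intro w hw w' hw' h
  induction w using List.reverseRecOn generalizing w' with
  | nil =>
    rcases w'.eq_nil_or_concat' with rfl | ⟨u', g', rfl⟩
    · rfl
    · exact absurd (h ▸ rfl) (wordPerm_append_singleton_apply_snd_ne (hw'.of_append_singleton).2)
  | append_singleton u g ih =>
    obtain ⟨hu, hug⟩ := IsOrderedWord.of_append_singleton hw
    rcases w'.eq_nil_or_concat' with rfl | ⟨u', g', rfl⟩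
    · exact absurd (h ▸ rfl) (wordPerm_append_singleton_apply_snd_ne hug)
    obtain ⟨hu', hug'⟩ := IsOrderedWord.of_append_singleton hw'
    obtain rfl := eq_of_wordPerm_append_singleton_eq hug hug' h
    rw [ih hu hu' (by simpa using h)]

theorem exists_isOrderedWord_wordPerm_eq (σ : Perm (Fin n)) :
    ∃ w : List (SGen n), IsOrderedWord w ∧ (∀ q ∈ w, q.1.2 ∈ σ.support) ∧ wordPerm w = σ := by
  induction hcard : σ.support.card using Nat.strong_induction_on generalizing σ with
  | _ k ih =>
  rcases σ.support.eq_empty_or_nonempty with hσ | hσ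
  · exact ⟨[], .nil, by simp, (Perm.support_eq_empty_iff.1 hσ).symm⟩
  -- peel off the transposition `(σ⁻¹ j, j)` with `j` the largest point moved by `σ`
  set j := σ.support.max' hσ
  have hj : j ∈ σ.support := σ.support.max'_mem hσ
  have hi : σ⁻¹ j ∈ σ.support := by
    rwa [← Perm.support_inv, Perm.apply_mem_support, Perm.support_inv]
  have hij : σ⁻¹ j < j := lt_of_le_of_ne (σ.support.le_max' _ hi)
    (Perm.mem_support.1 (by rwa [Perm.support_inv]))
  have hτ : (σ * swap (σ⁻¹ j) j).support ⊆ σ.support.erase j := by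
    intro y hy
    rw [← Perm.support_inv, mul_inv_rev, swap_inv, swap_comm] at hy
    obtain ⟨hyσ, hyj⟩ := Perm.mem_support_swap_mul_imp_mem_support_ne hy
    exact mem_erase.2 ⟨hyj, by rwa [Perm.support_inv] at hyσ⟩
  obtain ⟨w, hw, hwτ, hwσ⟩ :=
    ih _ (hcard ▸ (card_le_card hτ).trans_lt (card_erase_lt_of_mem hj)) _ rfl
  have hw_lt : ∀ q ∈ w, q.1.2 < j := fun q hq =>
    have hq := mem_erase.1 (hτ (hwτ q hq))
    lt_of_le_of_ne (σ.support.le_max' _ hq.2) hq.1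
  refine ⟨w ++ [SGen.of _ _ hij], ?_, ?_, ?_⟩
  · exact List.pairwise_append.2 ⟨hw, List.pairwise_singleton _ _,
      fun q hq _ hg => List.mem_singleton.1 hg ▸ hw_lt q hq⟩
  · intro q hq
    rcases List.mem_append.1 hq with hq | hq
    · exact mem_of_mem_erase (hτ (hwτ q hq))
    · exact List.mem_singleton.1 hq ▸ hj
  · rw [wordPerm_append_singleton, hwσ, SGen.toPerm_of, mul_assoc, swap_mul_self, mul_one]

end Words

section GradedAlgebra

variable {n : ℕ}

theorem sgen_of_lt {i j : Fin n} (h : i < j) : sgen i j h.ne = FreeAlgebra.ι ℂ (SGen.of i j h) :=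
  dif_pos h

theorem sgen_comm {i j : Fin n} (h : i ≠ j) : sgen i j h = sgen j i h.symm := by
  rcases h.lt_or_gt with h | h
  · rw [sgen_of_lt h]; exact (dif_neg (asymm h) : sgen j i h.ne' = _).symm
  · rw [sgen_of_lt h]; exact dif_neg (asymm h)

noncomputable def grGen (g : SGen n) : RingQuot (grRel n) :=
  RingQuot.mkAlgHom ℂ (grRel n) (FreeAlgebra.ι ℂ g)

noncomputable def grMonomial (w : List (SGen n)) : RingQuot (grRel n) := (w.map grGen).prod

@[simp] theorem grMonomial_nil : grMonomial ([] : List (SGen n)) = 1 := rfl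

@[simp] theorem grMonomial_cons (g : SGen n) (w : List (SGen n)) :
    grMonomial (g :: w) = grGen g * grMonomial w := by
  simp [grMonomial]

theorem grGen_of {i j : Fin n} (h : i < j) :
    grGen (SGen.of i j h) = RingQuot.mkAlgHom ℂ (grRel n) (sgen i j h.ne) := by
  rw [sgen_of_lt h]; rfl

theorem exists_grGen_eq_mkAlgHom_sgen {i k : Fin n} (h : i ≠ k) :
    ∃ a : SGen n, grGen a = RingQuot.mkAlgHom ℂ (grRel n) (sgen i k h) ∧ a.1.2 = max i k := by
  rcases h.lt_or_gt with hlt | hlt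
  · exact ⟨SGen.of i k hlt, grGen_of hlt, (max_eq_right hlt.le).symm⟩
  · refine ⟨SGen.of k i hlt, ?_, (max_eq_left hlt.le).symm⟩
    rw [grGen_of, sgen_comm]

section Relations

variable {i j k l : Fin n}

theorem mkAlgHom_sgen_mul_self (h : i ≠ j) :
    RingQuot.mkAlgHom ℂ (grRel n) (sgen i j h) * RingQuot.mkAlgHom ℂ (grRel n) (sgen i j h) =
      0 := by
  simpa using RingQuot.mkAlgHom_rel ℂ (grRel.sq i j h)

theorem mkAlgHom_sgen_braid (hij : i ≠ j) (hjk : j ≠ k) (hik : i ≠ k) :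
    RingQuot.mkAlgHom ℂ (grRel n) (sgen i j hij) * RingQuot.mkAlgHom ℂ (grRel n) (sgen j k hjk) =
      RingQuot.mkAlgHom ℂ (grRel n) (sgen i k hik) *
        RingQuot.mkAlgHom ℂ (grRel n) (sgen i j hij) := by
  simpa using RingQuot.mkAlgHom_rel ℂ (grRel.braid i j k hij hjk hik)

theorem mkAlgHom_sgen_comm (hij : i ≠ j) (hkl : k ≠ l) (hik : i ≠ k) (hil : i ≠ l)
    (hjk : j ≠ k) (hjl : j ≠ l) :
    RingQuot.mkAlgHom ℂ (grRel n) (sgen i j hij) * RingQuot.mkAlgHom ℂ (grRel n) (sgen k l hkl) =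
      RingQuot.mkAlgHom ℂ (grRel n) (sgen k l hkl) *
        RingQuot.mkAlgHom ℂ (grRel n) (sgen i j hij) := by
  simpa using RingQuot.mkAlgHom_rel ℂ (grRel.comm i j k l hij hkl hik hil hjk hjl)

end Relations

theorem grGen_mul_self (g : SGen n) : grGen g * grGen g = 0 := by
  obtain ⟨i, j, hij, rfl⟩ := g.exists_eq_of
  rw [grGen_of]
  exact mkAlgHom_sgen_mul_self _

theorem exists_grGen_mul_grGen_of_snd_eq {g h : SGen n} (hne : g ≠ h) (heq : h.1.2 = g.1.2) :
    ∃ a : SGen n, a.1.2 < g.1.2 ∧ grGen g * grGen h = grGen a * grGen g := by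
  obtain ⟨i, j, hij, rfl⟩ := g.exists_eq_of
  obtain ⟨k, l, hkl, rfl⟩ := h.exists_eq_of
  obtain rfl : l = j := heq
  have hik : i ≠ k := by rintro rfl; exact hne rfl
  obtain ⟨a, ha, hmax⟩ := exists_grGen_eq_mkAlgHom_sgen hik
  refine ⟨a, hmax ▸ max_lt hij hkl, ?_⟩
  rw [ha, grGen_of, grGen_of, sgen_comm hkl.ne]
  exact mkAlgHom_sgen_braid _ _ _

theorem exists_grGen_mul_grGen_of_snd_lt {g h : SGen n} (hlt : h.1.2 < g.1.2) :
    ∃ b : SGen n, b.1.2 = g.1.2 ∧ grGen g * grGen h = grGen h * grGen b := by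
  obtain ⟨i, j, hij, rfl⟩ := g.exists_eq_of
  obtain ⟨k, l, hkl, rfl⟩ := h.exists_eq_of
  change l < j at hlt
  by_cases hik : i = k
  · subst hik
    refine ⟨SGen.of l j hlt, rfl, ?_⟩
    rw [grGen_of, grGen_of, grGen_of]
    exact (mkAlgHom_sgen_braid hkl.ne hlt.ne hij.ne).symm
  by_cases hil : i = l
  · subst hil
    refine ⟨SGen.of k j (hkl.trans hlt), rfl, ?_⟩
    rw [grGen_of, grGen_of, grGen_of, sgen_comm hkl.ne]
    exact (mkAlgHom_sgen_braid hkl.ne' (hkl.trans hlt).ne hij.ne).symm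
  · refine ⟨SGen.of i j hij, rfl, ?_⟩
    rw [grGen_of, grGen_of]
    exact mkAlgHom_sgen_comm _ _ hik hil (hkl.trans hlt).ne' hlt.ne'

end GradedAlgebra

section Spanning

variable {n : ℕ}

noncomputable abbrev orderedSpan (n : ℕ) : Submodule ℂ (RingQuot (grRel n)) :=
  Submodule.span ℂ (Set.range fun w : {w : List (SGen n) // IsOrderedWord w} => grMonomial w.1)

theorem grMonomial_mem_orderedSpan {w : List (SGen n)} (hw : IsOrderedWord w) :
    grMonomial w ∈ orderedSpan n :=
  Submodule.subset_span ⟨⟨w, hw⟩, rfl⟩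

theorem mul_mem_orderedSpan {x y : RingQuot (grRel n)}
    (hx : ∀ u, IsOrderedWord u → x * grMonomial u ∈ orderedSpan n) (hy : y ∈ orderedSpan n) :
    x * y ∈ orderedSpan n := by
  induction hy using Submodule.span_induction with
  | mem _ h => obtain ⟨⟨u, hu⟩, rfl⟩ := h; exact hx u hu
  | zero => simp
  | add _ _ _ _ h₁ h₂ => rw [mul_add]; exact add_mem h₁ h₂
  | smul c _ _ h => rw [mul_smul_comm]; exact Submodule.smul_mem _ c h

/-- Straightening: the relations move a letter to its place in an ordered word, on lexicographic
induction on `(max of the letter, length of the word)`. -/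
theorem grGen_mul_grMonomial_mem_orderedSpan (g : SGen n) (w : List (SGen n))
    (hw : IsOrderedWord w) : grGen g * grMonomial w ∈ orderedSpan n := by
  match w, hw with
  | [], _ => simpa using grMonomial_mem_orderedSpan (List.pairwise_singleton _ g)
  | h :: w, hw =>
    have hw' := List.pairwise_cons.1 hw
    rw [grMonomial_cons, ← mul_assoc]
    rcases lt_trichotomy g.1.2 h.1.2 with hlt | heq | hgt
    · rw [mul_assoc, ← grMonomial_cons, ← grMonomial_cons]
      refine grMonomial_mem_orderedSpan (List.pairwise_cons.2 ⟨fun q hq => ?_, hw⟩)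
      rcases List.mem_cons.1 hq with rfl | hq
      exacts [hlt, hlt.trans (hw'.1 q hq)]
    · by_cases hgh : g = h
      · rw [hgh, grGen_mul_self, zero_mul]
        exact zero_mem _
      obtain ⟨a, ha, e⟩ := exists_grGen_mul_grGen_of_snd_eq hgh heq.symm
      rw [e, mul_assoc, ← grMonomial_cons]
      exact grGen_mul_grMonomial_mem_orderedSpan a (g :: w)
        (List.pairwise_cons.2 ⟨fun q hq => heq ▸ hw'.1 q hq, hw'.2⟩)
    · obtain ⟨b, hb, e⟩ := exists_grGen_mul_grGen_of_snd_lt hgt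
      rw [e, mul_assoc]
      exact mul_mem_orderedSpan (fun u hu => grGen_mul_grMonomial_mem_orderedSpan h u hu)
        (grGen_mul_grMonomial_mem_orderedSpan b w hw'.2)
termination_by ((g.1.2 : ℕ), w.length)
decreasing_by
  all_goals simp_wf
  · exact Prod.Lex.left _ _ ha
  · exact Prod.Lex.left _ _ hgt
  · rw [hb]; exact Prod.Lex.right _ (Nat.lt_succ_self _)

theorem orderedSpan_eq_top : orderedSpan n = ⊤ := by
  rw [eq_top_iff]
  rintro x -
  obtain ⟨y, rfl⟩ := RingQuot.mkAlgHom_surjective ℂ (grRel n) x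
  suffices h : ∀ z ∈ orderedSpan n, RingQuot.mkAlgHom ℂ (grRel n) y * z ∈ orderedSpan n by
    simpa using h 1 (grMonomial_mem_orderedSpan (w := []) List.Pairwise.nil)
  induction y using FreeAlgebra.induction with
  | grade0 r =>
    intro z hz
    rw [AlgHom.commutes, ← Algebra.smul_def]
    exact Submodule.smul_mem _ r hz
  | grade1 g => exact fun z => mul_mem_orderedSpan (grGen_mul_grMonomial_mem_orderedSpan g)
  | mul a b ha hb =>
    intro z hz
    rw [map_mul, mul_assoc]
    exact ha _ (hb z hz)
  | add a b ha hb =>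
    intro z hz
    rw [map_add, add_mul]
    exact add_mem (ha z hz) (hb z hz)

end Spanning

section Independence

variable {n : ℕ}

noncomputable def freeGradedRep (n : ℕ) :
    FreeAlgebra ℂ (SGen n) →ₐ[ℂ] Module.End ℂ (Perm (Fin n) →₀ ℂ) :=
  FreeAlgebra.lift ℂ fun g => Perm.gradedMulLeft g.toPerm

theorem freeGradedRep_sgen {i j : Fin n} (h : i ≠ j) :
    freeGradedRep n (sgen i j h) = Perm.gradedMulLeft (swap i j) := by
  rcases h.lt_or_gt with hlt | hlt
  · rw [sgen_of_lt hlt, freeGradedRep, FreeAlgebra.lift_ι_apply]; rfl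
  · rw [sgen_comm, sgen_of_lt hlt, freeGradedRep, FreeAlgebra.lift_ι_apply, swap_comm]; rfl

theorem freeGradedRep_eq_of_grRel ⦃x y : FreeAlgebra ℂ (SGen n)⦄ (h : grRel n x y) :
    freeGradedRep n x = freeGradedRep n y := by
  have hswap {i j : Fin n} (h : i ≠ j) : (swap i j).IsSwap := ⟨i, j, h, rfl⟩
  cases h with
  | sq i j h =>
    rw [map_mul, map_zero, freeGradedRep_sgen]
    exact Perm.gradedMulLeft_mul_self (hswap h)
  | braid i j k hij hjk hik =>
    simp only [map_mul, freeGradedRep_sgen]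
    refine Perm.gradedMulLeft_mul_gradedMulLeft_eq (hswap hij) (hswap hjk) (hswap hik)
      (hswap hij) ?_
    rw [mul_swap_eq_swap_mul, swap_apply_right, swap_apply_of_ne_of_ne hik.symm hjk.symm]
  | comm i j k l hij hkl hik hil hjk hjl =>
    simp only [map_mul, freeGradedRep_sgen]
    refine Perm.gradedMulLeft_mul_gradedMulLeft_eq (hswap hij) (hswap hkl) (hswap hkl)
      (hswap hij) ?_
    rw [mul_swap_eq_swap_mul, swap_apply_of_ne_of_ne hik.symm hjk.symm,
      swap_apply_of_ne_of_ne hil.symm hjl.symm]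

/-- The associated graded of the left regular representation of `ℂ[Perm (Fin n)]`. -/
noncomputable def gradedRep (n : ℕ) : RingQuot (grRel n) →ₐ[ℂ] Module.End ℂ (Perm (Fin n) →₀ ℂ) :=
  RingQuot.liftAlgHom ℂ ⟨freeGradedRep n, freeGradedRep_eq_of_grRel⟩

theorem gradedRep_grGen (g : SGen n) : gradedRep n (grGen g) = Perm.gradedMulLeft g.toPerm := by
  rw [gradedRep, grGen, RingQuot.liftAlgHom_mkAlgHom_apply, freeGradedRep,
    FreeAlgebra.lift_ι_apply]

theorem gradedRep_grMonomial_single_one {w : List (SGen n)} (hw : IsOrderedWord w) :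
    gradedRep n (grMonomial w) (Finsupp.single 1 1) = Finsupp.single (wordPerm w) 1 := by
  induction w with
  | nil => simp
  | cons g w ih =>
    rw [grMonomial_cons, map_mul, Module.End.mul_apply, ih (List.pairwise_cons.1 hw).2,
      gradedRep_grGen, Perm.gradedMulLeft_single, if_pos, wordPerm_cons]
    exact Perm.numCycles_swap_mul_add_one (not_sameCycle_wordPerm hw)

theorem wordPerm_bijective :
    Function.Bijective fun w : {w : List (SGen n) // IsOrderedWord w} => wordPerm w.1 := by
  refine ⟨fun w w' h => Subtype.ext (wordPerm_injOn w.2 w'.2 h), fun σ => ?_⟩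
  obtain ⟨w, hw, -, rfl⟩ := exists_isOrderedWord_wordPerm_eq σ
  exact ⟨⟨w, hw⟩, rfl⟩

theorem linearIndependent_grMonomial :
    LinearIndependent ℂ fun w : {w : List (SGen n) // IsOrderedWord w} => grMonomial w.1 := by
  refine LinearIndependent.of_comp ((LinearMap.applyₗ (Finsupp.single 1 1)).comp
    (gradedRep n).toLinearMap) ?_
  convert (Finsupp.linearIndependent_single_one ℂ (Perm (Fin n))).comp _
    wordPerm_bijective.injective
  exact funext fun w => gradedRep_grMonomial_single_one w.2

end Independence

/-- The associated graded algebra `gr ℂ[S_n]`, presented by generators `s_{ij}` with the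
homogenized relations, has dimension `n!`, with a basis given by the ordered monomials in
which `max(i_l, j_l)` strictly increases from left to right. -/
theorem stmt14 (n : ℕ) :
    ∃ b : Module.Basis (OrderedWords n) ℂ (RingQuot (grRel n)),
      (∀ w : OrderedWords n,
        b w = (w.1.map (fun p => RingQuot.mkAlgHom ℂ (grRel n) (FreeAlgebra.ι ℂ p))).prod) ∧
      Nat.card (OrderedWords n) = n.factorial := by
  let e : OrderedWords n ≃ {w : List (SGen n) // IsOrderedWord w} :=
    Equiv.subtypeEquivRight fun w => isOrderedWord_iff_isChain.symm
  refine ⟨(Module.Basis.mk linearIndependent_grMonomial orderedSpan_eq_top.ge).reindex e.symm,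
    fun w => ?_, ?_⟩
  · rw [Module.Basis.reindex_apply, Module.Basis.mk_apply]
    rfl
  · rw [Nat.card_congr (e.trans (Equiv.ofBijective _ wordPerm_bijective)), Nat.card_perm,
      Nat.card_fin]
end
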